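/- arXiv:2510.24679 — 7 statements merged into one kernel-verified Lean document; each statement's English description precedes it below -/
import Mathlib

section
/- Let P be an n×n stochastic matrix such that I - P + 1·hᵀ is invertible for every vector h with hᵀ1 = 1. Then the quantity tr((I - P + 1·hᵀ)^{-1}) is independent of the choice of h; in particular, for any two vectors h₁, h₂ with h₁ᵀ1 = h₂ᵀ1 = 1 and both matrices invertible, tr((I - P + 1·h₁ᵀ)^{-1}) = tr((I - P + 1·h₂ᵀ)^{-1}). -/
/-!
Write `A_h = 1 - P + 𝟙 hᵀ`. Since `P 𝟙 = 𝟙` and `hᵀ 𝟙 = 1`, every `A_h` fixes `𝟙`, and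
`A_{h₂} = A_{h₁} + 𝟙 dᵀ` with `d = h₂ - h₁`, `dᵀ 𝟙 = 0`. For invertible `A`, `B = A + 𝟙 dᵀ` fixing
`𝟙`, the resolvent identity gives `A⁻¹ - B⁻¹ = A⁻¹ 𝟙 dᵀ B⁻¹ = 𝟙 (dᵀ B⁻¹)`, a rank-one matrix of
trace `dᵀ B⁻¹ 𝟙 = dᵀ 𝟙 = 0`.
-/

open Matrix BigOperators

namespace Matrix

variable {ι R : Type*} [Fintype ι] [DecidableEq ι] [CommRing R]

theorem inv_mulVec_eq_self {A : Matrix ι ι R} (hA : IsUnit A) {u : ι → R} (hAu : A *ᵥ u = u) :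
    A⁻¹ *ᵥ u = u := by
  conv_lhs => rw [← hAu, mulVec_mulVec, nonsing_inv_mul A ((isUnit_iff_isUnit_det A).mp hA),
    one_mulVec]

theorem one_sub_add_vecMulVec_mulVec_eq_self {M : Matrix ι ι R} {u h : ι → R}
    (hMu : M *ᵥ u = u) (hhu : h ⬝ᵥ u = 1) : (1 - M + vecMulVec u h) *ᵥ u = u := by
  simp [add_mulVec, sub_mulVec, hMu, vecMulVec_mulVec, hhu]

theorem trace_inv_eq_of_eq_add_vecMulVec {A B : Matrix ι ι R} (hA : IsUnit A) (hB : IsUnit B)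
    {u d : ι → R} (hAu : A *ᵥ u = u) (hBA : B = A + vecMulVec u d) (hdu : d ⬝ᵥ u = 0) :
    trace B⁻¹ = trace A⁻¹ := by
  have hBu : B *ᵥ u = u := by
    rw [hBA, add_mulVec, vecMulVec_mulVec, hAu]
    simp [hdu]
  have hdiff : A⁻¹ - B⁻¹ = vecMulVec u (d ᵥ* B⁻¹) := by
    rw [inv_sub_inv (iff_of_true hA hB), hBA, add_sub_cancel_left, mul_vecMulVec,
      inv_mulVec_eq_self hA hAu, vecMulVec_mul]
  have htrace : trace (A⁻¹ - B⁻¹) = 0 := by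
    rw [hdiff, trace_vecMulVec, dotProduct_comm, ← dotProduct_mulVec, inv_mulVec_eq_self hB hBu,
      hdu]
  rw [trace_sub, sub_eq_zero] at htrace
  exact htrace.symm

end Matrix

theorem kemeny_trace_independent_of_h_general {n : ℕ}
    (P : Matrix (Fin n) (Fin n) ℝ)
    (hProw : ∀ i, ∑ j, P i j = 1)
    (hinv : ∀ h : Fin n → ℝ, ∑ i, h i = 1 →
      IsUnit (1 - P + Matrix.vecMulVec (fun _ => 1) h))
    (h₁ h₂ : Fin n → ℝ) (hs₁ : ∑ i, h₁ i = 1) (hs₂ : ∑ i, h₂ i = 1) :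
    Matrix.trace ((1 - P + Matrix.vecMulVec (fun _ => 1) h₁)⁻¹) =
      Matrix.trace ((1 - P + Matrix.vecMulVec (fun _ => 1) h₂)⁻¹) := by
  have hP : P *ᵥ (fun _ => 1) = fun _ => 1 := funext fun i => by simp [mulVec, dotProduct, hProw]
  have hsum (h : Fin n → ℝ) (hs : ∑ i, h i = 1) : h ⬝ᵥ (fun _ => 1) = 1 :=
    (dotProduct_one h).trans hs
  refine (trace_inv_eq_of_eq_add_vecMulVec (hinv h₁ hs₁) (hinv h₂ hs₂)
    (one_sub_add_vecMulVec_mulVec_eq_self hP (hsum h₁ hs₁)) (d := h₂ - h₁) ?_ ?_).symm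
  · rw [vecMulVec_sub]
    abel
  · rw [sub_dotProduct, hsum h₁ hs₁, hsum h₂ hs₂, sub_self]

theorem kemeny_trace_independent_of_h {n : ℕ}
    (P : Matrix (Fin n) (Fin n) ℝ)
    (hPnn : ∀ i j, 0 ≤ P i j) (hProw : ∀ i, ∑ j, P i j = 1)
    (hinv : ∀ h : Fin n → ℝ, ∑ i, h i = 1 →
      IsUnit (1 - P + Matrix.vecMulVec (fun _ => 1) h))
    (h₁ h₂ : Fin n → ℝ) (hs₁ : ∑ i, h₁ i = 1) (hs₂ : ∑ i, h₂ i = 1) :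
    Matrix.trace ((1 - P + Matrix.vecMulVec (fun _ => 1) h₁)⁻¹) =
      Matrix.trace ((1 - P + Matrix.vecMulVec (fun _ => 1) h₂)⁻¹) :=
  kemeny_trace_independent_of_h_general P hProw hinv h₁ h₂ hs₁ hs₂
end

section
/- Let P be an irreducible stochastic matrix with stationary distribution π. Then I - P + 1·πᵀ is invertible. -/
/-!
If `(1 - P + 1 πᵀ) x = 0`, multiplying on the left by `πᵀ` (which `1 - P + 1 πᵀ` fixes, since
`πᵀ P = πᵀ` and `πᵀ 1 = 1`) gives `πᵀ x = 0`, hence `P x = x`. By the maximum principle a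
`P`-harmonic vector is constant when `P` is irreducible: at a maximal coordinate `i` the average
`(Pᵏ x) i = x i` forces `x j = x i` wherever `(Pᵏ) i j > 0`. So `x = c 1`, and `c = πᵀ x = 0`.
-/

open Matrix BigOperators

namespace Matrix

lemma pow_mulVec_eq_self {R ι : Type*} [Fintype ι] [DecidableEq ι] [Semiring R]
    {M : Matrix ι ι R} {x : ι → R} (hx : M *ᵥ x = x) (k : ℕ) : (M ^ k) *ᵥ x = x := by
  induction k with
  | zero => simp
  | succ k ih => rw [pow_succ, ← mulVec_mulVec, hx, ih]

variable {R ι : Type*} [Fintype ι] [DecidableEq ι] [Ring R] [LinearOrder R] [IsStrictOrderedRing R]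

lemma apply_eq_of_mulVec_eq_self_of_forall_le {M : Matrix ι ι R} (hM : M ∈ rowStochastic R ι)
    {x : ι → R} (hx : M *ᵥ x = x) {i : ι} (hmax : ∀ l, x l ≤ x i) {j : ι} (hij : 0 < M i j) :
    x j = x i := by
  have hsum : ∑ l, M i l * (x i - x l) = 0 := by
    have hxi : ∑ l, M i l * x l = x i := congrFun hx i
    simp only [mul_sub, Finset.sum_sub_distrib, ← Finset.sum_mul,
      sum_row_of_mem_rowStochastic hM, one_mul, hxi, sub_self]
  have hterm := (Finset.sum_eq_zero_iff_of_nonneg fun l _ =>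
    mul_nonneg (nonneg_of_mem_rowStochastic hM) (sub_nonneg.2 (hmax l))).1 hsum j
    (Finset.mem_univ j)
  exact (sub_eq_zero.1 ((mul_eq_zero.1 hterm).resolve_left hij.ne')).symm

lemma apply_eq_apply_of_mulVec_eq_self {P : Matrix ι ι R} (hP : P ∈ rowStochastic R ι)
    (hirr : ∀ i j, ∃ k, 0 < (P ^ k) i j) {x : ι → R} (hx : P *ᵥ x = x) (i j : ι) :
    x i = x j := by
  have : Nonempty ι := ⟨i⟩
  obtain ⟨m, hm⟩ := Finite.exists_max x
  have heq_max (l : ι) : x l = x m := by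
    obtain ⟨k, hk⟩ := hirr m l
    exact apply_eq_of_mulVec_eq_self_of_forall_le (pow_mem hP k) (pow_mulVec_eq_self hx k) hm hk
  rw [heq_max i, heq_max j]

end Matrix

theorem fundamental_matrix_invertible_general {n : ℕ}
    (P : Matrix (Fin n) (Fin n) ℝ) (π : Fin n → ℝ)
    (hPnn : ∀ i j, 0 ≤ P i j) (hProw : ∀ i, ∑ j, P i j = 1)
    (hirr : ∀ i j, ∃ k, 0 < (P ^ k) i j)
    (hπsum : ∑ i, π i = 1)
    (hstat : Matrix.vecMul π P = π) :
    IsUnit (1 - P + Matrix.vecMulVec (fun _ => 1) π) := by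
  set Z := 1 - P + Matrix.vecMulVec (fun _ => 1) π
  have hP : P ∈ rowStochastic ℝ (Fin n) := mem_rowStochastic_iff_sum.2 ⟨hPnn, hProw⟩
  have hπZ : π ᵥ* Z = π := by
    have hπ1 : π ⬝ᵥ (fun _ => 1) = 1 := by simpa [dotProduct] using hπsum
    simp [Z, vecMul_add, vecMul_sub, hstat, vecMul_vecMulVec, hπ1]
  refine mulVec_injective_iff_isUnit.1 (LinearMap.ker_eq_bot (f := Z.mulVecLin) |>.1
    (ker_mulVecLin_eq_bot_iff.2 fun x hx => ?_))
  have hπx : π ⬝ᵥ x = 0 := by rw [← hπZ, ← dotProduct_mulVec, hx, dotProduct_zero]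
  have hPx : P *ᵥ x = x := by
    simpa [Z, add_mulVec, sub_mulVec, vecMulVec_mulVec, hπx, sub_eq_zero, eq_comm] using hx
  funext j
  have hconst : x = fun _ => x j :=
    funext fun i => apply_eq_apply_of_mulVec_eq_self hP hirr hPx i j
  rw [hconst] at hπx
  simpa [dotProduct, ← Finset.sum_mul, hπsum] using hπx

theorem fundamental_matrix_invertible {n : ℕ}
    (P : Matrix (Fin n) (Fin n) ℝ) (π : Fin n → ℝ)
    (hPnn : ∀ i j, 0 ≤ P i j) (hProw : ∀ i, ∑ j, P i j = 1)
    (hirr : ∀ i j, ∃ k, 0 < (P ^ k) i j)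
    (hπnn : ∀ i, 0 ≤ π i) (hπsum : ∑ i, π i = 1)
    (hstat : Matrix.vecMul π P = π) :
    IsUnit (1 - P + Matrix.vecMulVec (fun _ => 1) π) :=
  fundamental_matrix_invertible_general P π hPnn hProw hirr hπsum hstat
end

section
/- Let P be a reversible stochastic matrix with positive stationary distribution π, and let π̂ = π^{1/2} entrywise. For any stochastic matrix X with D_π X = Xᵀ D_π and π stationary, the matrix W = I - D_{π̂} X D_{π̂}^{-1} + π̂ π̂ᵀ satisfies W π̂ = (π̂ᵀπ̂) π̂, W is symmetric, and if additionally X is irreducible then W is positive definite. -/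
/-!
Write a vector as `x = D_{√π} u`. Using the row sums of `X` and its reversibility, the quadratic
form of `W` becomes
  `xᵀ W x = ½ ∑ᵢⱼ πᵢ Xᵢⱼ (uᵢ - uⱼ)² + (∑ᵢ πᵢ uᵢ)²`,
the Dirichlet form of the chain plus the squared `π`-mean of `u`. If this vanishes, `u` is
constant across every positive entry of `X`, hence constant by irreducibility, and its mean being
zero forces `u = 0`.
-/

open Matrix

namespace Matrix

variable {ι : Type*} [Fintype ι] [DecidableEq ι]

theorem apply_eq_of_pow_apply_pos {R : Type*} [Ring R] [LinearOrder R] [IsOrderedRing R]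
    [PosMulStrictMono R] [Nontrivial R] {X : Matrix ι ι R} (hX : ∀ i j, 0 ≤ X i j) {α : Type*}
    {u : ι → α} (hu : ∀ i j, 0 < X i j → u i = u j) {k : ℕ} {i j : ι}
    (h : 0 < (X ^ k) i j) : u i = u j := by
  let := toQuiver X
  obtain ⟨⟨p, -⟩⟩ := (pow_apply_pos_iff_nonempty_path hX k i j).1 h
  clear h
  induction p with
  | nil => rfl
  | cons _ e ih => exact ih.trans (hu _ _ e.down)

theorem isSymm_diagonal_mul_mul_diagonal_inv {𝕜 : Type*} [Field 𝕜] {X : Matrix ι ι 𝕜}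
    {s : ι → 𝕜} (hs : ∀ i, s i ≠ 0) (h : ∀ i j, s i ^ 2 * X i j = s j ^ 2 * X j i) :
    (diagonal s * X * diagonal (fun i => (s i)⁻¹)).IsSymm := by
  ext i j
  simp only [transpose_apply, mul_diagonal, diagonal_mul]
  field_simp [hs i, hs j]
  linear_combination h j i

end Matrix

section Reversible

variable {ι : Type*} [Fintype ι] {π : ι → ℝ} {X : Matrix ι ι ℝ}

theorem sum_mul_apply_eq_of_reversible (hrow : ∀ i, ∑ j, X i j = 1)
    (hrev : ∀ i j, π i * X i j = π j * X j i) (j : ι) : ∑ i, π i * X i j = π j := by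
  simp_rw [hrev _ j, ← Finset.mul_sum, hrow, mul_one]

variable (π X) in
noncomputable def dirichletForm (u : ι → ℝ) : ℝ :=
  (∑ i, ∑ j, π i * X i j * (u i - u j) ^ 2) / 2

theorem dirichletForm_eq (hrow : ∀ i, ∑ j, X i j = 1)
    (hrev : ∀ i j, π i * X i j = π j * X j i) (u : ι → ℝ) :
    dirichletForm π X u = ∑ i, π i * u i ^ 2 - ∑ i, ∑ j, π i * X i j * (u i * u j) := by
  have hleft : ∑ i, ∑ j, π i * X i j * u i ^ 2 = ∑ i, π i * u i ^ 2 := by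
    simp_rw [← Finset.sum_mul, ← Finset.mul_sum, hrow, mul_one]
  have hright : ∑ i, ∑ j, π i * X i j * u j ^ 2 = ∑ j, π j * u j ^ 2 := by
    rw [Finset.sum_comm]
    simp_rw [← Finset.sum_mul, sum_mul_apply_eq_of_reversible hrow hrev]
  have hexpand : ∀ i j, π i * X i j * (u i - u j) ^ 2 =
      π i * X i j * u i ^ 2 + π i * X i j * u j ^ 2 - 2 * (π i * X i j * (u i * u j)) :=
    fun i j => by ring
  simp only [dirichletForm, hexpand, Finset.sum_add_distrib, Finset.sum_sub_distrib,
    ← Finset.mul_sum, hleft, hright]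
  ring

theorem dirichletForm_nonneg (hπ : ∀ i, 0 ≤ π i) (hX : ∀ i j, 0 ≤ X i j) (u : ι → ℝ) :
    0 ≤ dirichletForm π X u := by
  refine div_nonneg (Finset.sum_nonneg fun i _ => Finset.sum_nonneg fun j _ => ?_) two_pos.le
  exact mul_nonneg (mul_nonneg (hπ i) (hX i j)) (sq_nonneg _)

theorem apply_eq_of_dirichletForm_eq_zero (hπ : ∀ i, 0 < π i) (hX : ∀ i j, 0 ≤ X i j)
    {u : ι → ℝ} (h : dirichletForm π X u = 0) {i j : ι} (hij : 0 < X i j) : u i = u j := by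
  have hnonneg : ∀ i j, 0 ≤ π i * X i j * (u i - u j) ^ 2 := fun i j =>
    mul_nonneg (mul_nonneg (hπ i).le (hX i j)) (sq_nonneg _)
  have hsum : ∑ i, ∑ j, π i * X i j * (u i - u j) ^ 2 = 0 := by
    unfold dirichletForm at h; linarith
  rw [Fintype.sum_eq_zero_iff_of_nonneg fun i => Fintype.sum_nonneg (hnonneg i)] at hsum
  have hterm : π i * X i j * (u i - u j) ^ 2 = 0 :=
    congrFun ((Fintype.sum_eq_zero_iff_of_nonneg (hnonneg i)).1 (congrFun hsum i)) j
  have hsq := (mul_eq_zero.1 hterm).resolve_left (mul_pos (hπ i) hij).ne'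
  exact sub_eq_zero.1 (pow_eq_zero_iff two_ne_zero |>.1 hsq)

end Reversible

section Symmetrized

variable {ι : Type*} [Fintype ι] [DecidableEq ι] {π : ι → ℝ} {X : Matrix ι ι ℝ}

variable (π X) in
noncomputable def symmetrizedFundamentalMatrix : Matrix ι ι ℝ :=
  1 - diagonal (fun i => √(π i)) * X * diagonal (fun i => (√(π i))⁻¹) +
    vecMulVec (fun i => √(π i)) (fun i => √(π i))

theorem symmetrizedFundamentalMatrix_mulVec_sqrt (hπ : ∀ i, 0 < π i)
    (hrow : ∀ i, ∑ j, X i j = 1) :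
    symmetrizedFundamentalMatrix π X *ᵥ (fun i => √(π i)) =
      (∑ i, √(π i) * √(π i)) • (fun i => √(π i)) := by
  have hinv : diagonal (fun i => (√(π i))⁻¹) *ᵥ (fun i => √(π i)) = 1 := by
    ext i; simp [mulVec_diagonal, (Real.sqrt_pos.2 (hπ i)).ne']
  have hX : X *ᵥ 1 = 1 := by ext i; simp [mulVec, dotProduct, hrow]
  rw [symmetrizedFundamentalMatrix, add_mulVec, sub_mulVec, one_mulVec, ← mulVec_mulVec,
    ← mulVec_mulVec, hinv, hX, vecMulVec_mulVec]
  ext i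
  simp [mulVec_diagonal, dotProduct, mul_comm]

theorem symmetrizedFundamentalMatrix_isSymm (hπ : ∀ i, 0 < π i)
    (hrev : ∀ i j, π i * X i j = π j * X j i) :
    (symmetrizedFundamentalMatrix π X).IsSymm := by
  refine (isSymm_one.sub (isSymm_diagonal_mul_mul_diagonal_inv
    (fun i => (Real.sqrt_pos.2 (hπ i)).ne') fun i j => ?_)).add (transpose_vecMulVec _ _)
  simpa only [Real.sq_sqrt (hπ _).le] using hrev i j

theorem dotProduct_symmetrizedFundamentalMatrix_mulVec (hπ : ∀ i, 0 < π i)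
    (hrow : ∀ i, ∑ j, X i j = 1) (hrev : ∀ i j, π i * X i j = π j * X j i) (u : ι → ℝ) :
    (fun i => √(π i) * u i) ⬝ᵥ symmetrizedFundamentalMatrix π X *ᵥ (fun i => √(π i) * u i) =
      dirichletForm π X u + (∑ i, π i * u i) ^ 2 := by
  have hsq : ∀ i, √(π i) * √(π i) = π i := fun i => Real.mul_self_sqrt (hπ i).le
  have hne : ∀ i, √(π i) ≠ 0 := fun i => (Real.sqrt_pos.2 (hπ i)).ne'
  rw [dirichletForm_eq hrow hrev, symmetrizedFundamentalMatrix]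
  simp only [add_mulVec, sub_mulVec, one_mulVec, dotProduct_add, dotProduct_sub]
  have hdiag : (fun i => √(π i) * u i) ⬝ᵥ (fun i => √(π i) * u i) = ∑ i, π i * u i ^ 2 :=
    Finset.sum_congr rfl fun i _ => by rw [← hsq]; ring
  have hX : (fun i => √(π i) * u i) ⬝ᵥ
      (diagonal (fun i => √(π i)) * X * diagonal (fun i => (√(π i))⁻¹)) *ᵥ
        (fun i => √(π i) * u i) = ∑ i, ∑ j, π i * X i j * (u i * u j) := by
    simp only [dotProduct, mulVec, mul_diagonal, diagonal_mul, Finset.mul_sum]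
    refine Finset.sum_congr rfl fun i _ => Finset.sum_congr rfl fun j _ => ?_
    field_simp [hne j]
    linear_combination u i * X i j * u j * hsq i
  have hrank : (fun i => √(π i) * u i) ⬝ᵥ
      vecMulVec (fun i => √(π i)) (fun i => √(π i)) *ᵥ (fun i => √(π i) * u i) =
        (∑ i, π i * u i) ^ 2 := by
    have hweight : (fun i => √(π i)) ⬝ᵥ (fun i => √(π i) * u i) = ∑ i, π i * u i :=
      Finset.sum_congr rfl fun i _ => by rw [← hsq]; ring
    rw [dotProduct_mulVec, vecMul_vecMulVec, smul_dotProduct, smul_eq_mul,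
      dotProduct_comm (fun i => √(π i) * u i), hweight, sq]
  rw [hdiag, hX, hrank]

theorem symmetrizedFundamentalMatrix_posDef (hπ : ∀ i, 0 < π i) (hX : ∀ i j, 0 ≤ X i j)
    (hrow : ∀ i, ∑ j, X i j = 1) (hrev : ∀ i j, π i * X i j = π j * X j i)
    (hirr : ∀ i j, ∃ k, 0 < (X ^ k) i j) :
    (symmetrizedFundamentalMatrix π X).PosDef := by
  refine posDef_iff_dotProduct_mulVec.2
    ⟨isHermitian_iff_isSymm.2 (symmetrizedFundamentalMatrix_isSymm hπ hrev), fun x hx => ?_⟩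
  set u : ι → ℝ := fun i => x i / √(π i)
  have hxu : x = fun i => √(π i) * u i := by
    ext i; exact (mul_div_cancel₀ _ (Real.sqrt_pos.2 (hπ i)).ne').symm
  rw [star_trivial, hxu, dotProduct_symmetrizedFundamentalMatrix_mulVec hπ hrow hrev]
  by_contra! hle
  have hD := dirichletForm_nonneg (fun i => (hπ i).le) hX u
  have hmean : (∑ i, π i * u i) ^ 2 = 0 := le_antisymm (by linarith) (sq_nonneg _)
  have hD0 : dirichletForm π X u = 0 := by linarith
  obtain ⟨i₀, hi₀⟩ := Function.ne_iff.1 hx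
  have hconst : ∀ i, u i = u i₀ := fun i =>
    have ⟨_, hk⟩ := hirr i i₀
    apply_eq_of_pow_apply_pos hX (fun _ _ => apply_eq_of_dirichletForm_eq_zero hπ hX hD0) hk
  have hπsum : 0 < ∑ i, π i := Finset.sum_pos (fun i _ => hπ i) ⟨i₀, Finset.mem_univ _⟩
  simp_rw [hconst, ← Finset.sum_mul, sq_eq_zero_iff, mul_eq_zero, hπsum.ne', false_or] at hmean
  exact hi₀ (by simp [hxu, hmean])

end Symmetrized

theorem symmetrized_fundamental_matrix_posdef_general {n : ℕ}
    (X : Matrix (Fin n) (Fin n) ℝ) (π : Fin n → ℝ)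
    (hπpos : ∀ i, 0 < π i)
    (hXnn : ∀ i j, 0 ≤ X i j) (hXrow : ∀ i, ∑ j, X i j = 1)
    (hrev : ∀ i j, π i * X i j = π j * X j i) :
    ((1 - Matrix.diagonal (fun i => Real.sqrt (π i)) * X *
        Matrix.diagonal (fun i => (Real.sqrt (π i))⁻¹) +
        Matrix.vecMulVec (fun i => Real.sqrt (π i)) (fun i => Real.sqrt (π i))).mulVec
        (fun i => Real.sqrt (π i)) =
      (∑ i, Real.sqrt (π i) * Real.sqrt (π i)) • (fun i => Real.sqrt (π i))) ∧
    (1 - Matrix.diagonal (fun i => Real.sqrt (π i)) * X *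
        Matrix.diagonal (fun i => (Real.sqrt (π i))⁻¹) +
        Matrix.vecMulVec (fun i => Real.sqrt (π i)) (fun i => Real.sqrt (π i))).IsSymm ∧
    ((∀ i j, ∃ k, 0 < (X ^ k) i j) →
      (1 - Matrix.diagonal (fun i => Real.sqrt (π i)) * X *
        Matrix.diagonal (fun i => (Real.sqrt (π i))⁻¹) +
        Matrix.vecMulVec (fun i => Real.sqrt (π i)) (fun i => Real.sqrt (π i))).PosDef) :=
  ⟨symmetrizedFundamentalMatrix_mulVec_sqrt hπpos hXrow,
    symmetrizedFundamentalMatrix_isSymm hπpos hrev,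
    symmetrizedFundamentalMatrix_posDef hπpos hXnn hXrow hrev⟩

theorem symmetrized_fundamental_matrix_posdef {n : ℕ}
    (X : Matrix (Fin n) (Fin n) ℝ) (π : Fin n → ℝ)
    (hπpos : ∀ i, 0 < π i) (hπsum : ∑ i, π i = 1)
    (hXnn : ∀ i j, 0 ≤ X i j) (hXrow : ∀ i, ∑ j, X i j = 1)
    (hrev : ∀ i j, π i * X i j = π j * X j i) :
    ((1 - Matrix.diagonal (fun i => Real.sqrt (π i)) * X *
        Matrix.diagonal (fun i => (Real.sqrt (π i))⁻¹) +
        Matrix.vecMulVec (fun i => Real.sqrt (π i)) (fun i => Real.sqrt (π i))).mulVec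
        (fun i => Real.sqrt (π i)) =
      (∑ i, Real.sqrt (π i) * Real.sqrt (π i)) • (fun i => Real.sqrt (π i))) ∧
    (1 - Matrix.diagonal (fun i => Real.sqrt (π i)) * X *
        Matrix.diagonal (fun i => (Real.sqrt (π i))⁻¹) +
        Matrix.vecMulVec (fun i => Real.sqrt (π i)) (fun i => Real.sqrt (π i))).IsSymm ∧
    ((∀ i j, ∃ k, 0 < (X ^ k) i j) →
      (1 - Matrix.diagonal (fun i => Real.sqrt (π i)) * X *
        Matrix.diagonal (fun i => (Real.sqrt (π i))⁻¹) +
        Matrix.vecMulVec (fun i => Real.sqrt (π i)) (fun i => Real.sqrt (π i))).PosDef) :=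
  symmetrized_fundamental_matrix_posdef_general X π hπpos hXnn hXrow hrev
end

section
/- Let f: ℝ^{n×n} → ℝ be defined by f(X) = tr((I - X + π̂π̂ᵀ)^{-1}) + (1/2)‖D_{π̂}^{-1} X D_{π̂} - P‖_F² on the open set where I - X + π̂π̂ᵀ is invertible. Then the (Euclidean) gradient of f at X is Grad f(X) = D_π^{-1} X D_π - D_{π̂}^{-1} P D_{π̂} + ((I - X + π̂π̂ᵀ)²)^{-T}, where π = π̂² entrywise. -/
/-! Along the line `t ↦ A + t • V` the inverse has derivative `-A⁻¹ V A⁻¹`, so the trace term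
contributes, in the direction `-V`, `tr (A⁻¹ V A⁻¹) = tr (V (A²)⁻¹) = ⟨V, ((A²)⁻¹)ᵀ⟩` by cyclicity
of the trace. The Frobenius term is a sum of squares of affine functions of `t`, whose derivative
is `∑ (p_i⁻¹ X_ij p_j - P_ij) p_i⁻¹ V_ij p_j`, i.e. the entrywise pairing of `V` with the
remaining two summands of the gradient. -/

open Matrix

section InverseDerivative

variable {𝕜 m : Type*} [RCLike 𝕜] [Fintype m] [DecidableEq m]

-- Any norm would do; this one makes matrices the normed algebra `hasFDerivAt_ringInverse` needs.
attribute [local instance] Matrix.linftyOpNormedRing Matrix.linftyOpNormedAlgebra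

theorem Matrix.hasDerivAt_inv_add_smul {A : Matrix m m 𝕜} (hA : IsUnit A) (V : Matrix m m 𝕜) :
    HasDerivAt (fun t : 𝕜 => (A + t • V)⁻¹) (-(A⁻¹ * V * A⁻¹)) 0 := by
  obtain ⟨u, rfl⟩ := hA
  have hline := ((hasDerivAt_id' (0 : 𝕜)).smul_const V).const_add (u : Matrix m m 𝕜)
  rw [one_smul] at hline
  have hinv := (hasFDerivAt_ringInverse (𝕜 := 𝕜) u).comp_hasDerivAt_of_eq 0 hline (by simp)
  rw [Function.comp_def] at hinv
  simp only [← nonsing_inv_eq_ringInverse] at hinv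
  refine hinv.congr_deriv ?_
  simp [coe_units_inv]

theorem Matrix.hasDerivAt_trace_inv_add_smul {A : Matrix m m 𝕜} (hA : IsUnit A)
    (V : Matrix m m 𝕜) :
    HasDerivAt (fun t : 𝕜 => trace (A + t • V)⁻¹) (-trace (A⁻¹ * V * A⁻¹)) 0 := by
  rw [← trace_neg]
  exact (traceLinearMap m 𝕜 𝕜).toContinuousLinearMap.hasFDerivAt.comp_hasDerivAt 0
      (hasDerivAt_inv_add_smul hA V)

end InverseDerivative

theorem hasDerivAt_half_sum_sq_add_mul {𝕜 ι κ : Type*} [RCLike 𝕜] [Fintype ι] [Fintype κ]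
    (a b : ι → κ → 𝕜) :
    HasDerivAt (fun t : 𝕜 => (1 / 2) * ∑ i, ∑ j, (a i j + t * b i j) ^ 2)
      (∑ i, ∑ j, a i j * b i j) 0 := by
  have hentry : ∀ i j,
      HasDerivAt (fun t : 𝕜 => (a i j + t * b i j) ^ 2) (2 * a i j * b i j) 0 := by
    intro i j
    refine (((hasDerivAt_mul_const (b i j)).const_add (a i j)).fun_pow 2).congr_deriv ?_
    simp
  refine ((HasDerivAt.fun_sum fun i _ => HasDerivAt.fun_sum fun j _ => hentry i j).const_mul
    (1 / 2 : 𝕜)).congr_deriv ?_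
  simp only [Finset.mul_sum]
  ring_nf

theorem Matrix.trace_inv_mul_mul_inv {R m : Type*} [Fintype m] [DecidableEq m] [CommRing R]
    (A V : Matrix m m R) : trace (A⁻¹ * V * A⁻¹) = ∑ i, ∑ j, V i j * ((A ^ 2)⁻¹)ᵀ i j := by
  rw [trace_mul_cycle, trace_mul_comm, pow_two, mul_inv_rev]
  simp only [trace, diag, mul_apply, transpose_apply]

theorem euclidean_gradient_formula_general {n : ℕ}
    (X P : Matrix (Fin n) (Fin n) ℝ) (p : Fin n → ℝ)
    (hM : IsUnit (1 - X + Matrix.vecMulVec p p)) :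
    ∀ V : Matrix (Fin n) (Fin n) ℝ,
      HasDerivAt (fun t : ℝ =>
          Matrix.trace ((1 - (X + t • V) + Matrix.vecMulVec p p)⁻¹)
          + (1 / 2) * ∑ i, ∑ j,
              ((p i)⁻¹ * ((X + t • V : Matrix (Fin n) (Fin n) ℝ) i j) * p j - P i j) ^ 2)
        (∑ i, ∑ j, V i j *
          ((Matrix.diagonal (fun i => (p i ^ 2)⁻¹) * X * Matrix.diagonal (fun i => p i ^ 2)
            - Matrix.diagonal (fun i => (p i)⁻¹) * P * Matrix.diagonal p
            + (((1 - X + Matrix.vecMulVec p p) ^ 2)⁻¹)ᵀ : Matrix (Fin n) (Fin n) ℝ) i j)) 0 := by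
  intro V
  set A := 1 - X + vecMulVec p p
  have hline : ∀ t : ℝ, 1 - (X + t • V) + vecMulVec p p = A + t • -V := by
    intro t
    simp only [A, smul_neg]
    abel
  have hentry : ∀ (t : ℝ) i j, (p i)⁻¹ * (X + t • V) i j * p j - P i j
      = ((p i)⁻¹ * X i j * p j - P i j) + t * ((p i)⁻¹ * V i j * p j) := by
    intro t i j
    simp only [Matrix.add_apply, Matrix.smul_apply, smul_eq_mul]
    ring
  have hsum := (hasDerivAt_trace_inv_add_smul hM (-V)).add
    (hasDerivAt_half_sum_sq_add_mul (fun i j => (p i)⁻¹ * X i j * p j - P i j)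
      (fun i j => (p i)⁻¹ * V i j * p j))
  simp only [← hline, ← hentry] at hsum
  refine hsum.congr_deriv ?_
  rw [mul_neg, neg_mul, trace_neg, neg_neg, trace_inv_mul_mul_inv, ← Finset.sum_add_distrib]
  refine Finset.sum_congr rfl fun i _ => ?_
  rw [← Finset.sum_add_distrib]
  refine Finset.sum_congr rfl fun j _ => ?_
  simp only [Matrix.add_apply, Matrix.sub_apply, mul_diagonal, diagonal_mul]
  ring

theorem euclidean_gradient_formula {n : ℕ}
    (X P : Matrix (Fin n) (Fin n) ℝ) (p : Fin n → ℝ)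
    (hp : ∀ i, 0 < p i)
    (hM : IsUnit (1 - X + Matrix.vecMulVec p p)) :
    ∀ V : Matrix (Fin n) (Fin n) ℝ,
      HasDerivAt (fun t : ℝ =>
          Matrix.trace ((1 - (X + t • V) + Matrix.vecMulVec p p)⁻¹)
          + (1 / 2) * ∑ i, ∑ j,
              ((p i)⁻¹ * ((X + t • V : Matrix (Fin n) (Fin n) ℝ) i j) * p j - P i j) ^ 2)
        (∑ i, ∑ j, V i j *
          ((Matrix.diagonal (fun i => (p i ^ 2)⁻¹) * X * Matrix.diagonal (fun i => p i ^ 2)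
            - Matrix.diagonal (fun i => (p i)⁻¹) * P * Matrix.diagonal p
            + (((1 - X + Matrix.vecMulVec p p) ^ 2)⁻¹)ᵀ : Matrix (Fin n) (Fin n) ℝ) i j)) 0 :=
  euclidean_gradient_formula_general X P p hM
end

section
/- Let X ∈ M (symmetric, supported on symmetric pattern S, with X π̂ = π̂ and X_{ij} > 0 on S), and for α ∈ ℝ^n set Z_α = (α π̂ᵀ + π̂ αᵀ) ⊙ (X ⊙ S), where ⊙ is the entrywise product and S is identified with its 0/1 indicator matrix. Then for every tangent vector ξ (symmetric, supported on S, ξπ̂ = 0), the inner product ⟨ξ, Z_α⟩_X = Σ_{X_{ij}≠0} ξ_{ij} (Z_α)_{ij}/X_{ij} equals zero; i.e., every Z_α is orthogonal to the tangent space with respect to the modified Fisher metric. -/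
open Matrix BigOperators

/-!
Off the pattern `ξ` vanishes and on it the weight `X i j` cancels, so the pairing is the
Frobenius product of `ξ` with `α pᵀ + p αᵀ`, i.e. `αᵀ (ξ p) + (pᵀ ξ) α`. Both terms vanish since
`ξ p = 0` and, `ξ` being symmetric, `pᵀ ξ = (ξ p)ᵀ = 0`.
-/

lemma mul_mul_masked_div_eq_mul {K : Type*} [Field K] {s : Prop} [Decidable s] {ξ x : K}
    (hx : s → x ≠ 0) (hξ : ¬ s → ξ = 0) (c : K) :
    ξ * (c * (x * if s then 1 else 0)) / x = ξ * c := by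
  by_cases h : s
  · simp only [h, if_true, mul_one]
    field_simp [hx h]
  · simp [h, hξ h]

lemma sum_mul_outer_add_outer_eq_zero {ι R : Type*} [Fintype ι] [CommRing R]
    {ξ : Matrix ι ι R} (hξ : ξ.IsSymm) {p : ι → R} (hξp : ξ *ᵥ p = 0) (α : ι → R) :
    ∑ i, ∑ j, ξ i j * (α i * p j + p i * α j) = 0 := by
  have hpξ : p ᵥ* ξ = 0 := by rw [← mulVec_transpose, hξ.eq, hξp]
  calc ∑ i, ∑ j, ξ i j * (α i * p j + p i * α j)
      = α ⬝ᵥ (ξ *ᵥ p) + (p ᵥ* ξ) ⬝ᵥ α := by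
        simp only [dotProduct, mulVec, vecMul, Finset.mul_sum, Finset.sum_mul,
          mul_add, Finset.sum_add_distrib]
        rw [Finset.sum_comm (f := fun i j => p j * ξ j i * α i)]
        congr 1 <;> refine Finset.sum_congr rfl fun _ _ => Finset.sum_congr rfl fun _ _ => ?_ <;>
          ring
    _ = 0 := by rw [hξp, hpξ, dotProduct_zero, zero_dotProduct, add_zero]

theorem normal_directions_orthogonal_to_tangent_general {n : ℕ}
    (S : Fin n → Fin n → Prop) [∀ i j, Decidable (S i j)]
    (p : Fin n → ℝ)
    (X : Matrix (Fin n) (Fin n) ℝ)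
    (hXpos : ∀ i j, S i j → 0 < X i j)
    (α : Fin n → ℝ)
    (ξ : Matrix (Fin n) (Fin n) ℝ)
    (hξsym : ξ.IsSymm) (hξS : ∀ i j, ¬ S i j → ξ i j = 0) (hξp : ξ.mulVec p = 0) :
    ∑ i, ∑ j, ξ i j *
      ((α i * p j + p i * α j) * (X i j * (if S i j then (1 : ℝ) else 0))) / X i j = 0 := by
  simp only [mul_mul_masked_div_eq_mul (fun h => (hXpos _ _ h).ne') (hξS _ _)]
  exact sum_mul_outer_add_outer_eq_zero hξsym hξp α

theorem normal_directions_orthogonal_to_tangent {n : ℕ}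
    (S : Fin n → Fin n → Prop) [∀ i j, Decidable (S i j)]
    (hSsym : ∀ i j, S i j → S j i) (hSdiag : ∀ i, S i i)
    (p : Fin n → ℝ) (hp : ∀ i, 0 < p i)
    (X : Matrix (Fin n) (Fin n) ℝ)
    (hXsym : X.IsSymm) (hXp : X.mulVec p = p)
    (hXpos : ∀ i j, S i j → 0 < X i j) (hXzero : ∀ i j, ¬ S i j → X i j = 0)
    (α : Fin n → ℝ)
    (ξ : Matrix (Fin n) (Fin n) ℝ)
    (hξsym : ξ.IsSymm) (hξS : ∀ i j, ¬ S i j → ξ i j = 0) (hξp : ξ.mulVec p = 0) :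
    ∑ i, ∑ j, ξ i j *
      ((α i * p j + p i * α j) * (X i j * (if S i j then (1 : ℝ) else 0))) / X i j = 0 :=
  normal_directions_orthogonal_to_tangent_general S p X hXpos α ξ hξsym hξS hξp
end

section
/- Suppose P is an irreducible stochastic matrix of order n with stationary distribution π whose entries are ordered π_1 ≤ π_2 ≤ ⋯ ≤ π_n, and suppose the leading (n-1)×(n-1) principal submatrix P_{n-1} is nilpotent and π_{n-1}ᵀ(I - P_{n-1})^{-1} 1 = Σ_{j=1}^n (n-j) π_j, where π_{n-1} is the leading (n-1)-subvector of π. Then Kemeny's constant satisfies K(P) = Σ_{j=1}^n (j-1) π_j. -/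
/-!
Write `L = 1 - P`, `J = 1πᵀ` and `Q = P_{n-1}`. Since `J² = J` and `LJ = 0`, any `M` with
`LM = 1 - wπᵀ` gives `(L + J)⁻¹ = (1 - J) M (1 - J) + J`, whose trace is `tr M + 1 - πᵀM1`.
Stationarity of `π` makes `M = (1 - Q)⁻¹ ⊕ 0` such a matrix, with `w = e_n / π_n`; here `π_n ≠ 0`,
as otherwise `π_{n-1}ᵀ(1 - Q) = 0` would force `π = 0`. Hence
`K(P) = tr (1 - Q)⁻¹ - π_{n-1}ᵀ(1 - Q)⁻¹1`. For nilpotent `Q` the first term is `n - 1`, because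
`(1 - Q)⁻¹ - 1 = Q(1 - Q)⁻¹` is nilpotent, and the hypothesis evaluates the second term.
-/

open Matrix BigOperators

theorem IsIdempotentElem.add_mul_one_sub_mul_mul_one_sub_add {R : Type*} [Ring R] {J L M W : R}
    (hJ : IsIdempotentElem J) (hLJ : L * J = 0) (hLM : L * M = 1 - W) (hWJ : W * J = W) :
    (L + J) * ((1 - J) * M * (1 - J) + J) = 1 := by
  have hL : L * (1 - J) = L := by rw [mul_sub, mul_one, hLJ, sub_zero]
  have hJ0 : J * (1 - J) = 0 := by rw [mul_sub, mul_one, hJ.eq, sub_self]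
  have hW0 : W * (1 - J) = 0 := by rw [mul_sub, mul_one, hWJ, sub_self]
  calc (L + J) * ((1 - J) * M * (1 - J) + J)
      = L * (1 - J) * M * (1 - J) + J * (1 - J) * M * (1 - J) + (L * J + J * J) := by
        noncomm_ring
    _ = L * M * (1 - J) + J := by rw [hL, hJ0, hLJ, hJ.eq]; noncomm_ring
    _ = 1 := by rw [hLM, sub_mul, hW0, one_mul, sub_zero, sub_add_cancel]

namespace Matrix

section Trace

variable {ι R : Type*} [Fintype ι] [DecidableEq ι] [CommRing R]

theorem trace_inv_one_sub_of_isNilpotent [IsReduced R] {Q : Matrix ι ι R}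
    (hQ : IsNilpotent Q) : trace (1 - Q)⁻¹ = (Fintype.card ι : R) := by
  have hU : IsUnit (1 - Q) := hQ.isUnit_one_sub
  have hcomm : Commute Q (1 - Q)⁻¹ := by
    rw [← hU.unit_spec, ← coe_units_inv]
    exact ((Commute.one_right Q).sub_right (Commute.refl Q)).units_inv_right
  have hinv : (1 - Q) * (1 - Q)⁻¹ = 1 := mul_nonsing_inv _ ((isUnit_iff_isUnit_det _).mp hU)
  rw [sub_mul, one_mul] at hinv
  rw [eq_add_of_sub_eq hinv, trace_add, trace_one,
    (isNilpotent_trace_of_isNilpotent (hcomm.isNilpotent_mul_right hQ)).eq_zero, add_zero]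

theorem trace_inv_one_sub_add_vecMulVec {P M : Matrix ι ι R} {π w : ι → R}
    (hP : P *ᵥ 1 = 1) (hπ : π ⬝ᵥ 1 = 1) (hM : (1 - P) * M = 1 - vecMulVec w π) :
    trace (1 - P + vecMulVec 1 π)⁻¹ = trace M + 1 - π ⬝ᵥ M *ᵥ 1 := by
  set J := vecMulVec 1 π
  have hJ : IsIdempotentElem J := by
    rw [IsIdempotentElem, vecMulVec_mul_vecMulVec, hπ, one_smul]
  have hLJ : (1 - P) * J = 0 := by
    rw [mul_vecMulVec, sub_mulVec, one_mulVec, hP, sub_self, zero_vecMulVec]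
  have hWJ : vecMulVec w π * J = vecMulVec w π := by
    rw [vecMulVec_mul_vecMulVec, hπ, one_smul]
  rw [inv_eq_right_inv (hJ.add_mul_one_sub_mul_mul_one_sub_add hLJ hM hWJ), trace_add,
    trace_mul_cycle, hJ.one_sub.eq, sub_mul, one_mul, trace_sub, trace_vecMulVec,
    vecMulVec_mul, trace_vecMulVec, dotProduct_comm 1 π, hπ, dotProduct_mulVec,
    dotProduct_comm 1]
  abel

end Trace

variable {α K : Type*} {n : ℕ}

def padLast [Zero α] (N : Matrix (Fin n) (Fin n) α) : Matrix (Fin (n + 1)) (Fin (n + 1)) α :=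
  of (Fin.snoc (fun i => Fin.snoc (N i) 0) 0)

section PadLast

variable [Zero α] (N : Matrix (Fin n) (Fin n) α)

@[simp] theorem padLast_castSucc_castSucc (i j : Fin n) :
    padLast N i.castSucc j.castSucc = N i j := by
  simp [padLast]

@[simp] theorem padLast_last_left (j : Fin (n + 1)) : padLast N (Fin.last n) j = 0 := by
  simp [padLast]

@[simp] theorem padLast_last_right (i : Fin (n + 1)) : padLast N i (Fin.last n) = 0 := by
  cases i using Fin.lastCases <;> simp [padLast]

end PadLast

theorem trace_padLast [AddCommMonoid α] (N : Matrix (Fin n) (Fin n) α) :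
    trace (padLast N) = trace N := by
  simp [trace, Fin.sum_univ_castSucc]

theorem dotProduct_padLast_mulVec [NonUnitalNonAssocSemiring α] (N : Matrix (Fin n) (Fin n) α)
    (v w : Fin (n + 1) → α) : v ⬝ᵥ padLast N *ᵥ w = Fin.init v ⬝ᵥ N *ᵥ Fin.init w := by
  simp [dotProduct, mulVec, Fin.sum_univ_castSucc, Fin.init]

section Stationary

variable [Field K] {P : Matrix (Fin (n + 1)) (Fin (n + 1)) K} {π : Fin (n + 1) → K}

theorem init_vecMul_one_sub_submatrix (hπ : π ᵥ* P = π) :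
    Fin.init π ᵥ* (1 - P.submatrix Fin.castSucc Fin.castSucc) =
      π (Fin.last n) • fun j => P (Fin.last n) j.castSucc := by
  ext j
  have hj := congrFun hπ j.castSucc
  simp only [vecMul, dotProduct, Fin.sum_univ_castSucc, Fin.init, sub_apply, one_apply,
    submatrix_apply, mul_sub, mul_ite, mul_one, mul_zero, Finset.sum_sub_distrib,
    Finset.sum_ite_eq', Finset.mem_univ, ↓reduceIte, Pi.smul_apply, smul_eq_mul] at hj ⊢
  linear_combination -hj

theorem last_ne_zero_of_vecMul_eq (hπ : π ᵥ* P = π)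
    (hQ : IsUnit (1 - P.submatrix Fin.castSucc Fin.castSucc)) (hπ0 : π ≠ 0) :
    π (Fin.last n) ≠ 0 := by
  intro hlast
  have hinit : Fin.init π = 0 := vecMul_injective_of_isUnit hQ <| by
    simp only [init_vecMul_one_sub_submatrix hπ, hlast, zero_smul, zero_vecMul]
  refine hπ0 (funext fun i => ?_)
  cases i using Fin.lastCases with
  | last => exact hlast
  | cast i => exact congrFun hinit i

theorem one_sub_mul_padLast (hπ : π ᵥ* P = π)
    (hQ : IsUnit (1 - P.submatrix Fin.castSucc Fin.castSucc)) (hlast : π (Fin.last n) ≠ 0) :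
    (1 - P) * padLast (1 - P.submatrix Fin.castSucc Fin.castSucc)⁻¹ =
      1 - vecMulVec (Pi.single (Fin.last n) (π (Fin.last n))⁻¹) π := by
  set Q := P.submatrix Fin.castSucc Fin.castSucc
  have hinv : (1 - Q) * (1 - Q)⁻¹ = 1 := mul_nonsing_inv _ ((isUnit_iff_isUnit_det _).mp hQ)
  have hinit :
      Fin.init π = π (Fin.last n) • ((fun j => P (Fin.last n) j.castSucc) ᵥ* (1 - Q)⁻¹) := by
    rw [← smul_vecMul, ← init_vecMul_one_sub_submatrix hπ, vecMul_vecMul, hinv, vecMul_one]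
  ext i j
  cases j using Fin.lastCases with
  | last => cases i using Fin.lastCases <;> simp [mul_apply, vecMulVec_apply, hlast]
  | cast j =>
    cases i using Fin.lastCases with
    | last =>
      have hj := congrFun hinit j
      simp only [Fin.init, Pi.smul_apply, vecMul, dotProduct, smul_eq_mul, mul_apply, sub_apply,
        one_apply, Fin.sum_univ_castSucc, (Fin.castSucc_lt_last _).ne', ↓reduceIte, zero_sub,
        padLast_castSucc_castSucc, neg_mul, Finset.sum_neg_distrib, padLast_last_left, mul_zero,
        add_zero, vecMulVec_apply, Pi.single_eq_same] at hj ⊢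
      field_simp
      rw [hj, mul_comm]
    | cast i =>
      simpa [mul_apply, vecMulVec_apply, Fin.sum_univ_castSucc, Q, one_apply] using
        congrFun (congrFun hinv i) j

end Stationary

end Matrix

theorem kirkland_equality_case_general {n : ℕ}
    (P : Matrix (Fin (n + 1)) (Fin (n + 1)) ℝ) (π : Fin (n + 1) → ℝ)
    (hProw : ∀ i, ∑ j, P i j = 1)
    (hπsum : ∑ i, π i = 1)
    (hstat : Matrix.vecMul π P = π)
    (hnil : IsNilpotent (Matrix.of fun (i j : Fin n) => P i.castSucc j.castSucc))
    (hsum : dotProduct (fun i : Fin n => π i.castSucc)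
        (((1 - Matrix.of fun (i j : Fin n) => P i.castSucc j.castSucc)⁻¹).mulVec
          (fun _ => 1)) =
      ∑ j : Fin (n + 1), ((n : ℝ) - (j : ℕ)) * π j) :
    Matrix.trace ((1 - P + Matrix.vecMulVec (fun _ => 1) π)⁻¹) - 1 =
      ∑ j : Fin (n + 1), ((j : ℕ) : ℝ) * π j := by
  change IsNilpotent (P.submatrix Fin.castSucc Fin.castSucc) at hnil
  change Fin.init π ⬝ᵥ (1 - P.submatrix Fin.castSucc Fin.castSucc)⁻¹ *ᵥ
    Fin.init (1 : Fin (n + 1) → ℝ) = _ at hsum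
  have hQ := hnil.isUnit_one_sub
  have hP1 : P *ᵥ 1 = 1 := funext fun i => by simpa [mulVec, dotProduct] using hProw i
  have hπ1 : π ⬝ᵥ 1 = 1 := by simpa [dotProduct] using hπsum
  have hlast : π (Fin.last n) ≠ 0 :=
    last_ne_zero_of_vecMul_eq hstat hQ fun h => by simp [h] at hπsum
  have hK := trace_inv_one_sub_add_vecMulVec hP1 hπ1 (one_sub_mul_padLast hstat hQ hlast)
  rw [trace_padLast, trace_inv_one_sub_of_isNilpotent hnil, dotProduct_padLast_mulVec, hsum]
    at hK
  have hweights : ∑ j : Fin (n + 1), ((n : ℝ) - (j : ℕ)) * π j =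
      n - ∑ j : Fin (n + 1), ((j : ℕ) : ℝ) * π j := by
    simp only [sub_mul, Finset.sum_sub_distrib, ← Finset.mul_sum, hπsum, mul_one]
  rw [show (fun _ => (1 : ℝ)) = 1 from rfl, hK, hweights, Fintype.card_fin]
  ring

theorem kirkland_equality_case {n : ℕ}
    (P : Matrix (Fin (n + 1)) (Fin (n + 1)) ℝ) (π : Fin (n + 1) → ℝ)
    (hPnn : ∀ i j, 0 ≤ P i j) (hProw : ∀ i, ∑ j, P i j = 1)
    (hirr : ∀ i j, ∃ k, 0 < (P ^ k) i j)
    (hπnn : ∀ i, 0 ≤ π i) (hπsum : ∑ i, π i = 1)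
    (hstat : Matrix.vecMul π P = π)
    (hmono : ∀ i j : Fin (n + 1), i ≤ j → π i ≤ π j)
    (hnil : IsNilpotent (Matrix.of fun (i j : Fin n) => P i.castSucc j.castSucc))
    (hsum : dotProduct (fun i : Fin n => π i.castSucc)
        (((1 - Matrix.of fun (i j : Fin n) => P i.castSucc j.castSucc)⁻¹).mulVec
          (fun _ => 1)) =
      ∑ j : Fin (n + 1), ((n : ℝ) - (j : ℕ)) * π j) :
    Matrix.trace ((1 - P + Matrix.vecMulVec (fun _ => 1) π)⁻¹) - 1 =
      ∑ j : Fin (n + 1), ((j : ℕ) : ℝ) * π j :=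
  kirkland_equality_case_general P π hProw hπsum hstat hnil hsum
end

section
/- Let P be a reversible stochastic matrix with positive stationary distribution π and let π̂ = π^{1/2}. If the eigenvalues of P are -1 ≤ λ_1 ≤ ⋯ ≤ λ_{n-1} < λ_n = 1 (real by reversibility, with λ_n = 1 simple by irreducibility), then Kemeny's constant satisfies K(P) = tr((I - P + 1πᵀ)^{-1}) - 1 = Σ_{i=1}^{n-1} 1/(1 - λ_i). -/
open Matrix BigOperators Polynomial

/-!
The all-ones vector is a right eigenvector of `I - P` for the eigenvalue `0`, so by Brauer's
rank-one perturbation theorem, adding `1πᵀ` moves that eigenvalue to `πᵀ1 = 1` and keeps the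
others, `1 - λᵢ` for `i < n`. Hence `(I - P + 1πᵀ)⁻¹` has eigenvalues `1` and `1 / (1 - λᵢ)`,
and its trace is their sum.
-/

namespace Matrix

variable {m K : Type*} [Fintype m] [DecidableEq m]

section CommRing

variable [CommRing K] {A : Matrix m m K} {r : m → K}

theorem trace_eq_sum_of_charpoly_eq_prod (h : A.charpoly = ∏ i, (X - C (r i))) :
    A.trace = ∑ i, r i := by
  rw [trace_eq_neg_charpoly_nextCoeff, h, prod_X_sub_C_nextCoeff, neg_neg]

theorem det_eq_prod_of_charpoly_eq_prod (h : A.charpoly = ∏ i, (X - C (r i))) :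
    A.det = ∏ i, r i := by
  rw [det_eq_sign_charpoly_coeff, h, coeff_zero_eq_eval_zero, eval_prod]
  simp only [eval_sub, eval_X, eval_C, zero_sub, Finset.prod_neg, Finset.card_univ, ← mul_assoc,
    ← mul_pow, neg_one_mul, neg_neg, one_pow, one_mul]

theorem det_one_sub_vecMulVec (w v : m → K) : (1 - vecMulVec w v).det = 1 - v ⬝ᵥ w := by
  rw [sub_eq_add_neg, ← neg_vecMulVec, vecMulVec_eq Unit,
    det_one_add_replicateCol_mul_replicateRow, dotProduct_neg, ← sub_eq_add_neg]

theorem scalar_eq_smul_one (x : K) : scalar m x = x • (1 : Matrix m m K) :=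
  (scalar_apply x).trans (smul_one_eq_diagonal x).symm

end CommRing

variable [Field K] [Infinite K] {A : Matrix m m K} {r : m → K}

theorem charpoly_scalar_sub_of_charpoly_eq_prod (h : A.charpoly = ∏ i, (X - C (r i))) (c : K) :
    (scalar m c - A).charpoly = ∏ i, (X - C (c - r i)) := by
  refine Polynomial.funext fun x => ?_
  have hneg : scalar m x - (scalar m c - A) = -(scalar m (c - x) - A) := by
    simp only [map_sub]; abel
  rw [eval_charpoly, hneg, det_neg, ← eval_charpoly, h, eval_prod, eval_prod, ← Finset.card_univ,
    ← Finset.prod_neg]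
  simp only [eval_sub, eval_X, eval_C]
  exact Finset.prod_congr rfl fun i _ => by ring

theorem charpoly_inv_of_charpoly_eq_prod (h : A.charpoly = ∏ i, (X - C (r i)))
    (hr : ∀ i, r i ≠ 0) : A⁻¹.charpoly = ∏ i, (X - C (r i)⁻¹) := by
  have hdet : A.det = ∏ i, r i := det_eq_prod_of_charpoly_eq_prod h
  have hA : IsUnit A.det := hdet ▸ (Finset.prod_ne_zero_iff.mpr fun i _ => hr i).isUnit
  refine Polynomial.eq_of_infinite_eval_eq _ _ ((Set.finite_singleton 0).infinite_compl.mono ?_)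
  intro x (hx : x ≠ 0)
  have hfactor : scalar m x - A⁻¹ = (-x) • A⁻¹ * (scalar m x⁻¹ - A) := by
    rw [scalar_eq_smul_one, scalar_eq_smul_one, Matrix.mul_sub, Matrix.smul_mul, Matrix.smul_mul,
      Matrix.mul_smul, Matrix.mul_one, nonsing_inv_mul A hA, smul_smul, neg_mul,
      mul_inv_cancel₀ hx]
    module
  rw [Set.mem_ofPred_eq, eval_charpoly, hfactor, det_mul, det_smul, det_nonsing_inv,
    Ring.inverse_eq_inv, ← eval_charpoly, hdet, h, eval_prod, eval_prod, ← Finset.card_univ,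
    ← Finset.prod_const, ← Finset.prod_inv_distrib, ← Finset.prod_mul_distrib,
    ← Finset.prod_mul_distrib]
  refine Finset.prod_congr rfl fun i _ => ?_
  simp only [eval_sub, eval_X, eval_C]
  field_simp [hr i]
  ring

theorem charpoly_add_vecMulVec_of_mulVec_eq_smul {v : m → K} {μ : K} (hv : A *ᵥ v = μ • v)
    (u : m → K) {q : K[X]} (hq : A.charpoly = (X - C μ) * q) :
    (A + vecMulVec v u).charpoly = (X - C (μ + u ⬝ᵥ v)) * q := by
  suffices h : (A + vecMulVec v u).charpoly * (X - C μ) = A.charpoly * (X - C (μ + u ⬝ᵥ v)) by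
    refine mul_right_cancel₀ (X_sub_C_ne_zero μ) ?_
    rw [h, hq]; ring
  refine Polynomial.eq_of_infinite_eval_eq _ _ ((Set.finite_singleton μ).infinite_compl.mono ?_)
  intro x (hx : x ≠ μ)
  have hx' : x - μ ≠ 0 := sub_ne_zero.mpr hx
  have hfactor : scalar m x - (A + vecMulVec v u)
      = (scalar m x - A) * (1 - vecMulVec ((x - μ)⁻¹ • v) u) := by
    rw [scalar_eq_smul_one, Matrix.mul_sub, Matrix.mul_one, mul_vecMulVec, mulVec_smul,
      sub_mulVec, hv, smul_mulVec, one_mulVec, ← sub_smul, smul_smul, inv_mul_cancel₀ hx',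
      one_smul]
    abel
  rw [Set.mem_ofPred_eq, eval_mul, eval_mul, eval_charpoly, eval_charpoly, hfactor, det_mul,
    det_one_sub_vecMulVec, dotProduct_smul, smul_eq_mul]
  simp only [eval_sub, eval_X, eval_C]
  field_simp
  ring

end Matrix

theorem kemeny_eigenvalue_formula_general {n : ℕ}
    (P : Matrix (Fin (n + 1)) (Fin (n + 1)) ℝ) (π : Fin (n + 1) → ℝ)
    (hProw : ∀ i, ∑ j, P i j = 1)
    (hπsum : ∑ i, π i = 1)
    (lam : Fin (n + 1) → ℝ)
    (htop : lam (Fin.last n) = 1)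
    (hlt : ∀ i : Fin (n + 1), i < Fin.last n → lam i < 1)
    (hchar : P.charpoly = ∏ i : Fin (n + 1), (Polynomial.X - Polynomial.C (lam i))) :
    Matrix.trace ((1 - P + Matrix.vecMulVec (fun _ => 1) π)⁻¹) - 1 =
      ∑ i : Fin n, 1 / (1 - lam i.castSucc) := by
  set ν : Fin (n + 1) → ℝ := Fin.snoc (fun i : Fin n => 1 - lam i.castSucc) 1
  have hkernel : (1 - P) *ᵥ (fun _ => 1) = (0 : ℝ) • fun _ => 1 := by
    rw [sub_mulVec, one_mulVec, zero_smul, sub_eq_zero]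
    ext i
    simp [mulVec, dotProduct, hProw]
  have hcharQ : (1 - P).charpoly = (X - C 0) * ∏ i : Fin n, (X - C (1 - lam i.castSucc)) := by
    rw [← map_one (scalar _), charpoly_scalar_sub_of_charpoly_eq_prod hchar,
      Fin.prod_univ_castSucc, htop, sub_self, mul_comm]
  have hcharM : (1 - P + vecMulVec (fun _ => 1) π).charpoly = ∏ i, (X - C (ν i)) := by
    rw [charpoly_add_vecMulVec_of_mulVec_eq_smul hkernel π hcharQ, Fin.prod_univ_castSucc]
    simp [ν, dotProduct, hπsum, mul_comm]
  have hν : ∀ i, ν i ≠ 0 := Fin.lastCases (by simp [ν]) fun i => by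
    simp only [ν, Fin.snoc_castSucc]
    linarith [hlt i.castSucc (Fin.castSucc_lt_last i)]
  rw [trace_eq_sum_of_charpoly_eq_prod (charpoly_inv_of_charpoly_eq_prod hcharM hν),
    Fin.sum_univ_castSucc]
  simp [ν, one_div]

theorem kemeny_eigenvalue_formula {n : ℕ}
    (P : Matrix (Fin (n + 1)) (Fin (n + 1)) ℝ) (π : Fin (n + 1) → ℝ)
    (hPnn : ∀ i j, 0 ≤ P i j) (hProw : ∀ i, ∑ j, P i j = 1)
    (hirr : ∀ i j, ∃ k, 0 < (P ^ k) i j)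
    (hπpos : ∀ i, 0 < π i) (hπsum : ∑ i, π i = 1)
    (hstat : Matrix.vecMul π P = π)
    (hrev : ∀ i j, π i * P i j = π j * P j i)
    (lam : Fin (n + 1) → ℝ)
    (hmono : Monotone lam)
    (hlo : ∀ i, -1 ≤ lam i)
    (htop : lam (Fin.last n) = 1)
    (hlt : ∀ i : Fin (n + 1), i < Fin.last n → lam i < 1)
    (hchar : P.charpoly = ∏ i : Fin (n + 1), (Polynomial.X - Polynomial.C (lam i))) :
    Matrix.trace ((1 - P + Matrix.vecMulVec (fun _ => 1) π)⁻¹) - 1 =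
      ∑ i : Fin n, 1 / (1 - lam i.castSucc) :=
  kemeny_eigenvalue_formula_general P π hProw hπsum lam htop hlt hchar
end
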